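/- arXiv:1609.00670 — 5 statements merged into one kernel-verified Lean document; each statement's English description precedes it below -/
import Mathlib

section
/- Let $A = (a_{ij})$ be an $m \times m$ nonnegative matrix whose every column is a probability vector, let $b$ and $x^*$ be positive probability vectors in $\mathbb{R}^m$ with $Ax^* = b$, and let $x_n$ be a positive probability vector. Define $b_n = Ax_n$ and $x_{n+1,j} = x_{n,j} \sum_{i=1}^m a_{ij} b_i/b_{n,i}$. Then $D(x^*, x_{n+1}) \le D(x^*, x_n) - D(b, b_n)$. -/
/-- Kullback–Leibler divergence between nonnegative vectors (real-valued,
with the convention `0 * log (0 / v) = 0`, which holds automatically in Lean). -/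
noncomputable def KL {m : ℕ} (u v : Fin m → ℝ) : ℝ :=
  ∑ i, u i * Real.log (u i / v i)

/-- The key inequality `D(x*, x_{n+1}) ≤ D(x*, x_n) - D(b, b_n)` for the EM iteration. -/
theorem em_iteration_KL_inequality {m : ℕ}
    (A : Matrix (Fin m) (Fin m) ℝ) (hA : ∀ i j, 0 ≤ A i j)
    (hcol : ∀ j, ∑ i, A i j = 1)
    (b xstar xn : Fin m → ℝ)
    (hb : ∀ i, 0 < b i) (hbsum : ∑ i, b i = 1)
    (hxs : ∀ j, 0 < xstar j) (hxssum : ∑ j, xstar j = 1)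
    (hxn : ∀ j, 0 < xn j) (hxnsum : ∑ j, xn j = 1)
    (hsol : A.mulVec xstar = b)
    (bn : Fin m → ℝ) (hbn : bn = A.mulVec xn)
    (xn1 : Fin m → ℝ) (hxn1 : ∀ j, xn1 j = xn j * ∑ i, A i j * (b i / bn i)) :
    KL xstar xn1 ≤ KL xstar xn - KL b bn := by
  have hbdef : ∀ i, b i = ∑ j, A i j * xstar j := by
    intro i
    rw [← hsol]
    simp [Matrix.mulVec, dotProduct]
  have hrow : ∀ i, ∃ j, 0 < A i j := by
    intro i
    by_contra h
    push_neg at h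
    have hz : ∀ j, A i j = 0 := fun j => le_antisymm (h j) (hA i j)
    have : b i = 0 := by rw [hbdef i]; simp [hz]
    exact (hb i).ne' this
  have hbn_pos : ∀ i, 0 < bn i := by
    intro i
    obtain ⟨j, hj⟩ := hrow i
    have hd : bn i = ∑ j, A i j * xn j := by
      rw [hbn]; simp [Matrix.mulVec, dotProduct]
    rw [hd]
    exact Finset.sum_pos' (fun k _ => mul_nonneg (hA i k) (hxn k).le)
      ⟨j, Finset.mem_univ j, mul_pos hj (hxn j)⟩
  set r : Fin m → ℝ := fun i => b i / bn i with hr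
  have hr_pos : ∀ i, 0 < r i := fun i => div_pos (hb i) (hbn_pos i)
  set S : Fin m → ℝ := fun j => ∑ i, A i j * r i with hS
  have hS_pos : ∀ j, 0 < S j := by
    intro j
    obtain ⟨i, hi⟩ : ∃ i, 0 < A i j := by
      by_contra h
      push_neg at h
      have hz : ∀ i, A i j = 0 := fun i => le_antisymm (h i) (hA i j)
      have h1 : (1 : ℝ) = 0 := by rw [← hcol j]; simp [hz]
      norm_num at h1
    exact Finset.sum_pos' (fun k _ => mul_nonneg (hA k j) (hr_pos k).le)
      ⟨i, Finset.mem_univ i, mul_pos hi (hr_pos i)⟩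
  have jensen : ∀ j, ∑ i, A i j * Real.log (r i) ≤ Real.log (S j) := by
    intro j
    have := strictConcaveOn_log_Ioi.concaveOn.le_map_sum
      (t := Finset.univ) (w := fun i => A i j) (p := r)
      (fun i _ => hA i j) (hcol j) (fun i _ => Set.mem_Ioi.mpr (hr_pos i))
    simpa [smul_eq_mul] using this
  have key : KL b bn ≤ ∑ j, xstar j * Real.log (S j) := by
    have step1 : KL b bn = ∑ j, xstar j * ∑ i, A i j * Real.log (r i) := by
      unfold KL
      calc ∑ i, b i * Real.log (b i / bn i)
          = ∑ i, (∑ j, A i j * xstar j) * Real.log (r i) := by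
            exact Finset.sum_congr rfl fun i _ => by rw [← hbdef i]
        _ = ∑ i, ∑ j, A i j * xstar j * Real.log (r i) := by
            exact Finset.sum_congr rfl fun i _ => by rw [Finset.sum_mul]
        _ = ∑ j, ∑ i, A i j * xstar j * Real.log (r i) := Finset.sum_comm
        _ = ∑ j, xstar j * ∑ i, A i j * Real.log (r i) := by
            refine Finset.sum_congr rfl fun j _ => ?_
            rw [Finset.mul_sum]
            exact Finset.sum_congr rfl fun i _ => by ring
    rw [step1]
    exact Finset.sum_le_sum fun j _ =>
      mul_le_mul_of_nonneg_left (jensen j) (hxs j).le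
  have diff : KL xstar xn - KL xstar xn1 = ∑ j, xstar j * Real.log (S j) := by
    unfold KL
    rw [← Finset.sum_sub_distrib]
    refine Finset.sum_congr rfl fun j _ => ?_
    have hxn1j : xn1 j = xn j * S j := hxn1 j
    rw [hxn1j, Real.log_div (hxs j).ne' (hxn j).ne',
        Real.log_div (hxs j).ne' (mul_pos (hxn j) (hS_pos j)).ne',
        Real.log_mul (hxn j).ne' (hS_pos j).ne']
    ring
  linarith [key, diff]
end

section
/- Let $A = (a_{ij})$ be an $m_1 \times m_2$ nonnegative matrix whose every column is a probability vector, let $b \in \mathbb{R}^{m_1}$ and $x^* \in \mathbb{R}^{m_2}$ be positive probability vectors with $Ax^* = b$, and let $x_0 \in \mathbb{R}^{m_2}$ be a positive probability vector. Define $b_n = Ax_n$ and $x_{n+1,j} = x_{n,j} \sum_{i=1}^{m_1} a_{ij} b_i/b_{n,i}$. Then $D(b, b_n) \to 0$ as $n \to \infty$. -/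
/-- Gibbs' inequality. -/
lemma KL_nonneg_aux {m : ℕ} (u v : Fin m → ℝ) (hu : ∀ i, 0 < u i) (hv : ∀ i, 0 < v i)
    (h : ∑ i, u i = ∑ i, v i) : 0 ≤ KL u v := by
  have h1 : ∀ i, u i * Real.log (v i / u i) ≤ v i - u i := by
    intro i
    have hlog := Real.log_le_sub_one_of_pos (div_pos (hv i) (hu i))
    have := mul_le_mul_of_nonneg_left hlog (hu i).le
    have hc : u i * (v i / u i) = v i := by
      rw [← mul_div_assoc]; exact mul_div_cancel_left₀ _ (hu i).ne'
    nlinarith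
  have h2 : ∑ i, u i * Real.log (v i / u i) ≤ 0 := by
    calc ∑ i, u i * Real.log (v i / u i) ≤ ∑ i, (v i - u i) :=
          Finset.sum_le_sum fun i _ => h1 i
      _ = 0 := by rw [Finset.sum_sub_distrib, ← h, sub_self]
  have h3 : KL u v = -∑ i, u i * Real.log (v i / u i) := by
    rw [KL, ← Finset.sum_neg_distrib]
    refine Finset.sum_congr rfl fun i _ => ?_
    rw [Real.log_div (hv i).ne' (hu i).ne', Real.log_div (hu i).ne' (hv i).ne']
    ring
  rw [h3]; linarith

/-- For a consistent nonnegative system, `D(b, bₙ) → 0`. -/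
theorem em_iteration_KL_tendsto_zero {m₁ m₂ : ℕ}
    (A : Matrix (Fin m₁) (Fin m₂) ℝ) (hA : ∀ i j, 0 ≤ A i j)
    (hcol : ∀ j, ∑ i, A i j = 1)
    (b : Fin m₁ → ℝ) (hb : ∀ i, 0 < b i) (hbsum : ∑ i, b i = 1)
    (xstar : Fin m₂ → ℝ) (hxs : ∀ j, 0 < xstar j) (hxssum : ∑ j, xstar j = 1)
    (hsol : A.mulVec xstar = b)
    (x : ℕ → Fin m₂ → ℝ) (hx0 : ∀ j, 0 < x 0 j) (hx0sum : ∑ j, x 0 j = 1)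
    (hrec : ∀ n j, x (n + 1) j = x n j * ∑ i, A i j * (b i / A.mulVec (x n) i)) :
    Filter.Tendsto (fun n => KL b (A.mulVec (x n))) Filter.atTop (nhds 0) := by
  have hmv : ∀ (y : Fin m₂ → ℝ) i, A.mulVec y i = ∑ j, A i j * y j := by
    intro y i; simp [Matrix.mulVec, dotProduct]
  -- each row of A has a positive entry (from b = A x*, b > 0)
  have hrow : ∀ i, ∃ j, 0 < A i j := by
    intro i
    by_contra hcon
    push_neg at hcon
    have hz : ∀ j, A i j = 0 := fun j => le_antisymm (hcon j) (hA i j)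
    have : b i = 0 := by rw [← hsol, hmv]; simp [hz]
    exact (hb i).ne' this
  -- positivity of A.mulVec y for positive y
  have hmvpos : ∀ (y : Fin m₂ → ℝ), (∀ j, 0 < y j) → ∀ i, 0 < A.mulVec y i := by
    intro y hy i
    obtain ⟨j0, hj0⟩ := hrow i
    rw [hmv]
    exact Finset.sum_pos' (fun j _ => mul_nonneg (hA i j) (hy j).le)
      ⟨j0, Finset.mem_univ j0, mul_pos hj0 (hy j0)⟩
  -- each column of A has a positive entry
  have hcolpos : ∀ j, ∃ i, 0 < A i j := by
    intro j
    by_contra hcon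
    push_neg at hcon
    have hz : ∀ i, A i j = 0 := fun i => le_antisymm (hcon i) (hA i j)
    have : (1 : ℝ) = 0 := by rw [← hcol j]; simp [hz]
    norm_num at this
  -- x n is a positive probability vector for all n
  have hxkey : ∀ n, (∀ j, 0 < x n j) ∧ (∑ j, x n j = 1) := by
    intro n
    induction n with
    | zero => exact ⟨hx0, hx0sum⟩
    | succ n ih =>
      obtain ⟨hpos, hsum⟩ := ih
      have hbn : ∀ i, 0 < A.mulVec (x n) i := hmvpos _ hpos
      constructor
      · intro j
        rw [hrec n j]
        obtain ⟨i0, hi0⟩ := hcolpos j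
        exact mul_pos (hpos j)
          (Finset.sum_pos' (fun i _ => mul_nonneg (hA i j) (div_pos (hb i) (hbn i)).le)
            ⟨i0, Finset.mem_univ i0, mul_pos hi0 (div_pos (hb i0) (hbn i0))⟩)
      · calc ∑ j, x (n + 1) j = ∑ j, ∑ i, x n j * (A i j * (b i / A.mulVec (x n) i)) := by
              simp only [hrec, Finset.mul_sum]
          _ = ∑ i, ∑ j, x n j * (A i j * (b i / A.mulVec (x n) i)) := Finset.sum_comm
          _ = ∑ i, (b i / A.mulVec (x n) i) * A.mulVec (x n) i := by
              refine Finset.sum_congr rfl fun i _ => ?_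
              rw [hmv, Finset.mul_sum]
              exact Finset.sum_congr rfl fun j _ => by ring
          _ = ∑ i, b i := Finset.sum_congr rfl fun i _ => div_mul_cancel₀ _ (hbn i).ne'
          _ = 1 := hbsum
  have hxpos : ∀ n j, 0 < x n j := fun n => (hxkey n).1
  have hxsum : ∀ n, ∑ j, x n j = 1 := fun n => (hxkey n).2
  have hbn : ∀ n i, 0 < A.mulVec (x n) i := fun n => hmvpos _ (hxpos n)
  have hbnsum : ∀ n, ∑ i, A.mulVec (x n) i = 1 := by
    intro n
    calc ∑ i, A.mulVec (x n) i = ∑ i, ∑ j, A i j * x n j := by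
          exact Finset.sum_congr rfl fun i _ => hmv _ i
      _ = ∑ j, ∑ i, A i j * x n j := Finset.sum_comm
      _ = ∑ j, x n j := by
          refine Finset.sum_congr rfl fun j _ => ?_
          rw [← Finset.sum_mul, hcol j, one_mul]
      _ = 1 := hxsum n
  set D : ℕ → ℝ := fun n => KL xstar (x n) with hD
  set K : ℕ → ℝ := fun n => KL b (A.mulVec (x n)) with hK
  have hKnonneg : ∀ n, 0 ≤ K n := fun n =>
    KL_nonneg_aux b _ hb (hbn n) (by rw [hbsum, hbnsum n])
  have hDnonneg : ∀ n, 0 ≤ D n := fun n =>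
    KL_nonneg_aux xstar _ hxs (hxpos n) (by rw [hxssum, hxsum n])
  -- key inequality : K n ≤ D n - D (n+1)
  have hkey : ∀ n, K n ≤ D n - D (n + 1) := by
    intro n
    have hdiff : D n - D (n + 1) = ∑ j, xstar j *
        Real.log (∑ i, A i j * (b i / A.mulVec (x n) i)) := by
      rw [hD]
      simp only [KL, ← Finset.sum_sub_distrib]
      refine Finset.sum_congr rfl fun j _ => ?_
      rw [← mul_sub,
        Real.log_div (hxs j).ne' (hxpos n j).ne',
        Real.log_div (hxs j).ne' (hxpos (n + 1) j).ne',
        hrec n j, Real.log_mul (hxpos n j).ne']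
      · ring
      · intro h0
        have := hrec n j ▸ (hxpos (n + 1) j)
        rw [h0, mul_zero] at this
        exact lt_irrefl _ this
    rw [hdiff]
    -- Jensen for log in each column, then swap sums
    have hjensen : ∀ j, ∑ i, A i j * Real.log (b i / A.mulVec (x n) i) ≤
        Real.log (∑ i, A i j * (b i / A.mulVec (x n) i)) := by
      intro j
      have := strictConcaveOn_log_Ioi.concaveOn.le_map_sum (t := Finset.univ)
        (w := fun i => A i j) (p := fun i => b i / A.mulVec (x n) i)
        (fun i _ => hA i j) (hcol j)
        (fun i _ => Set.mem_Ioi.2 (div_pos (hb i) (hbn n i)))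
      simpa [smul_eq_mul] using this
    calc K n = ∑ i, b i * Real.log (b i / A.mulVec (x n) i) := rfl
      _ = ∑ i, (∑ j, A i j * xstar j) * Real.log (b i / A.mulVec (x n) i) := by
          refine Finset.sum_congr rfl fun i _ => ?_
          rw [← hmv xstar i, hsol]
      _ = ∑ i, ∑ j, xstar j * (A i j * Real.log (b i / A.mulVec (x n) i)) := by
          refine Finset.sum_congr rfl fun i _ => ?_
          rw [Finset.sum_mul]
          exact Finset.sum_congr rfl fun j _ => by ring
      _ = ∑ j, ∑ i, xstar j * (A i j * Real.log (b i / A.mulVec (x n) i)) := Finset.sum_comm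
      _ = ∑ j, xstar j * ∑ i, A i j * Real.log (b i / A.mulVec (x n) i) := by
          refine Finset.sum_congr rfl fun j _ => ?_
          rw [Finset.mul_sum]
      _ ≤ ∑ j, xstar j * Real.log (∑ i, A i j * (b i / A.mulVec (x n) i)) :=
          Finset.sum_le_sum fun j _ =>
            mul_le_mul_of_nonneg_left (hjensen j) (hxs j).le
  -- D is antitone and bounded below, hence converges
  have hanti : ∀ n, D (n + 1) ≤ D n := fun n => by
    have := hkey n; have := hKnonneg n; linarith
  have hDanti : Antitone D := antitone_nat_of_succ_le hanti
  have hbdd : BddBelow (Set.range D) := ⟨0, by rintro _ ⟨n, rfl⟩; exact hDnonneg n⟩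
  have hDlim : Filter.Tendsto D Filter.atTop (nhds (⨅ n, D n)) :=
    tendsto_atTop_ciInf hDanti hbdd
  have hDlim' : Filter.Tendsto (fun n => D (n + 1)) Filter.atTop (nhds (⨅ n, D n)) :=
    hDlim.comp (Filter.tendsto_add_atTop_nat 1)
  have hsub : Filter.Tendsto (fun n => D n - D (n + 1)) Filter.atTop (nhds 0) := by
    have := hDlim.sub hDlim'
    simpa using this
  exact squeeze_zero hKnonneg hkey hsub
end

section
/- Let $A = (a_{ij})$ be an $m_1 \times m_2$ nonnegative matrix whose every column is a probability vector, let $b \in \mathbb{R}^{m_1}$ be a positive probability vector, and let $x_0 \in \mathbb{R}^{m_2}$ be a positive probability vector. Define $b_n = Ax_n$ and $x_{n+1,j} = x_{n,j} \sum_{i=1}^{m_1} a_{ij} b_i/b_{n,i}$. Then the sequence $D(b, Ax_n)$ is nonincreasing and converges to $\inf_x D(b, Ax)$, where the infimum is over all positive probability vectors $x \in \mathbb{R}^{m_2}$. -/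
open Finset Real Filter

private lemma logSum {ι : Type*} (s : Finset ι) (u v : ι → ℝ)
    (hu : ∀ i ∈ s, 0 ≤ u i) (hv : ∀ i ∈ s, 0 < v i) :
    (∑ i ∈ s, u i) * Real.log ((∑ i ∈ s, u i) / (∑ i ∈ s, v i)) ≤
      ∑ i ∈ s, u i * Real.log (u i / v i) := by
  rcases eq_or_lt_of_le (Finset.sum_nonneg hu) with h0 | hUpos
  · have hz : ∀ i ∈ s, u i = 0 := (Finset.sum_eq_zero_iff_of_nonneg hu).1 h0.symm
    have h1 : ∑ i ∈ s, u i * Real.log (u i / v i) = 0 :=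
      Finset.sum_eq_zero fun i hi => by rw [hz i hi, zero_mul]
    rw [h1, ← h0, zero_mul]
  · have hne : s.Nonempty := by
      rcases Finset.eq_empty_or_nonempty s with h | h
      · subst h; simp at hUpos
      · exact h
    have hVpos : 0 < ∑ i ∈ s, v i := Finset.sum_pos hv hne
    set U := ∑ i ∈ s, u i with hU
    set V := ∑ i ∈ s, v i with hV
    have hkey : ∀ i ∈ s, u i * Real.log (U / V) + (u i - v i * (U / V))
        ≤ u i * Real.log (u i / v i) := by
      intro i hi
      rcases eq_or_lt_of_le (hu i hi) with h0 | hpos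
      · rw [← h0]
        have h1 : 0 ≤ v i * (U / V) :=
          mul_nonneg (hv i hi).le (div_nonneg hUpos.le hVpos.le)
        simp only [zero_mul, zero_add, zero_sub, zero_div]
        linarith
      · have hvi := hv i hi
        have hq : 0 < U / V / (u i / v i) :=
          div_pos (div_pos hUpos hVpos) (div_pos hpos hvi)
        have h1 := Real.log_le_sub_one_of_pos hq
        rw [Real.log_div (div_pos hUpos hVpos).ne' (div_pos hpos hvi).ne'] at h1
        have h2 : u i * (Real.log (U/V) - Real.log (u i / v i))
            ≤ u i * (U / V / (u i / v i) - 1) :=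
          mul_le_mul_of_nonneg_left h1 hpos.le
        have h3 : u i * (U / V / (u i / v i) - 1) = v i * (U / V) - u i := by
          field_simp
        nlinarith [h2, h3]
    have hsum := Finset.sum_le_sum hkey
    have e1 : ∑ i ∈ s, (u i * Real.log (U / V) + (u i - v i * (U / V)))
        = U * Real.log (U / V) := by
      rw [Finset.sum_add_distrib, Finset.sum_sub_distrib, ← Finset.sum_mul, ← Finset.sum_mul]
      have : V * (U / V) = U := by field_simp
      rw [← hU, ← hV, this]
      ring
    linarith [e1 ▸ hsum]

private lemma gibbs {ι : Type*} (s : Finset ι) (u v : ι → ℝ)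
    (hu : ∀ i ∈ s, 0 ≤ u i) (hv : ∀ i ∈ s, 0 < v i)
    (h : ∑ i ∈ s, u i = ∑ i ∈ s, v i) :
    0 ≤ ∑ i ∈ s, u i * Real.log (u i / v i) := by
  have h1 := logSum s u v hu hv
  rw [h] at h1
  rcases eq_or_ne (∑ i ∈ s, v i) 0 with h0 | h0
  · rw [h0] at h1; simpa using h1
  · rw [div_self h0, Real.log_one, mul_zero] at h1; exact h1

private lemma jensen_log {ι : Type*} [Fintype ι] (w z : ι → ℝ)
    (hw : ∀ i, 0 ≤ w i) (hz : ∀ i, 0 < z i) (hw1 : ∑ i, w i = 1) :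
    ∑ i, w i * Real.log (z i) ≤ Real.log (∑ i, w i * z i) := by
  classical
  set F : Finset ι := Finset.univ.filter (fun i => 0 < w i) with hF
  have hmem : ∀ i, i ∈ F ↔ 0 < w i := by intro i; simp [hF]
  have hzero : ∀ i ∈ Finset.univ, i ∉ F → w i = 0 := by
    intro i _ hi
    have : ¬ 0 < w i := fun h => hi ((hmem i).2 h)
    exact le_antisymm (not_lt.1 this) (hw i)
  have hFw : ∑ i ∈ F, w i = 1 := by
    rw [Finset.sum_subset (Finset.subset_univ F) hzero, hw1]
  have hFwz : ∑ i ∈ F, w i * z i = ∑ i, w i * z i :=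
    Finset.sum_subset (Finset.subset_univ F)
      (fun i hi hni => by rw [hzero i hi hni, zero_mul])
  have hwzpos : 0 < ∑ i, w i * z i := by
    have hex : ∃ i ∈ Finset.univ, 0 < w i * z i := by
      by_contra hc
      push_neg at hc
      have : ∀ i ∈ Finset.univ, w i = 0 := by
        intro i hi
        rcases eq_or_lt_of_le (hw i) with h | h
        · exact h.symm
        · exact absurd (mul_pos h (hz i)) (by simpa using hc i hi)
      rw [Finset.sum_eq_zero this] at hw1
      norm_num at hw1
    exact Finset.sum_pos' (fun i _ => mul_nonneg (hw i) (hz i).le) hex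
  have h1 := logSum F w (fun i => w i * z i) (fun i _ => hw i)
    (fun i hi => mul_pos ((hmem i).1 hi) (hz i))
  rw [hFw, hFwz, one_mul] at h1
  have h2 : ∑ i ∈ F, w i * Real.log (w i / (w i * z i))
      = -∑ i ∈ F, w i * Real.log (z i) := by
    rw [← Finset.sum_neg_distrib]
    apply Finset.sum_congr rfl
    intro i hi
    have hwi := (hmem i).1 hi
    have : w i / (w i * z i) = (z i)⁻¹ := by
      rw [inv_eq_one_div, div_eq_div_iff (mul_pos hwi (hz i)).ne' (hz i).ne']
      ring
    rw [this, Real.log_inv]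
    ring
  have h3 : ∑ i ∈ F, w i * Real.log (z i) = ∑ i, w i * Real.log (z i) :=
    Finset.sum_subset (Finset.subset_univ F)
      (fun i hi hni => by rw [hzero i hi hni, zero_mul])
  rw [h2, h3] at h1
  rw [one_div, Real.log_inv] at h1
  linarith

private lemma mulVec_apply' {m₁ m₂ : ℕ} (A : Matrix (Fin m₁) (Fin m₂) ℝ)
    (x : Fin m₂ → ℝ) (i : Fin m₁) : A.mulVec x i = ∑ j, A i j * x j := by
  simp [Matrix.mulVec, dotProduct]

private lemma step_mono {m₁ m₂ : ℕ} (A : Matrix (Fin m₁) (Fin m₂) ℝ)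
    (hA : ∀ i j, 0 ≤ A i j) (b : Fin m₁ → ℝ) (hb : ∀ i, 0 < b i)
    (x x' : Fin m₂ → ℝ) (hx : ∀ j, 0 < x j)
    (s : Fin m₂ → ℝ) (hs : ∀ j, 0 < s j)
    (hsrep : ∀ j, s j = ∑ i, A i j * (b i / A.mulVec x i))
    (hx' : ∀ j, x' j = x j * s j)
    (hAx : ∀ i, 0 < A.mulVec x i) (hAx' : ∀ i, 0 < A.mulVec x' i)
    (hsum : ∑ j, x' j = ∑ j, x j) :
    ∑ i, b i * Real.log (b i / A.mulVec x' i) ≤ ∑ i, b i * Real.log (b i / A.mulVec x i) := by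
  have key1 : ∀ i, ∑ j, (A i j * x j / A.mulVec x i) * Real.log (s j)
      ≤ Real.log (A.mulVec x' i / A.mulVec x i) := by
    intro i
    have hw : ∀ j, 0 ≤ A i j * x j / A.mulVec x i := fun j =>
      div_nonneg (mul_nonneg (hA i j) (hx j).le) (hAx i).le
    have hw1 : ∑ j, A i j * x j / A.mulVec x i = 1 := by
      rw [← Finset.sum_div, ← mulVec_apply', div_self (hAx i).ne']
    have h1 := jensen_log (fun j => A i j * x j / A.mulVec x i) s hw hs hw1
    have e : ∑ j, (A i j * x j / A.mulVec x i) * s j = A.mulVec x' i / A.mulVec x i := by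
      rw [mulVec_apply' A x' i, Finset.sum_div]
      apply Finset.sum_congr rfl
      intro j _
      rw [hx' j]
      ring
    rw [e] at h1
    exact h1
  have key2 : ∑ i, b i * ∑ j, (A i j * x j / A.mulVec x i) * Real.log (s j)
      ≤ ∑ i, b i * Real.log (A.mulVec x' i / A.mulVec x i) :=
    Finset.sum_le_sum fun i _ => mul_le_mul_of_nonneg_left (key1 i) (hb i).le
  have key3 : ∑ i, b i * ∑ j, (A i j * x j / A.mulVec x i) * Real.log (s j)
      = ∑ j, x' j * Real.log (s j) := by
    have e1 : ∀ i, b i * ∑ j, (A i j * x j / A.mulVec x i) * Real.log (s j)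
        = ∑ j, (x j * (A i j * (b i / A.mulVec x i))) * Real.log (s j) := by
      intro i
      rw [Finset.mul_sum]
      apply Finset.sum_congr rfl
      intro j _
      ring
    rw [Finset.sum_congr rfl (fun i _ => e1 i), Finset.sum_comm]
    apply Finset.sum_congr rfl
    intro j _
    rw [← Finset.sum_mul, hx' j, hsrep j, ← Finset.mul_sum]
  have key4 : 0 ≤ ∑ j, x' j * Real.log (s j) := by
    have e : ∀ j, x' j * Real.log (s j) = x' j * Real.log (x' j / x j) := by
      intro j
      rw [hx' j, mul_div_cancel_left₀ (s j) (hx j).ne']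
    rw [Finset.sum_congr rfl (fun j _ => e j)]
    exact gibbs Finset.univ x' x
      (fun j _ => by rw [hx' j]; exact mul_nonneg (hx j).le (hs j).le)
      (fun j _ => hx j) hsum
  have e2 : ∑ i, b i * Real.log (A.mulVec x' i / A.mulVec x i)
      = (∑ i, b i * Real.log (b i / A.mulVec x i))
        - ∑ i, b i * Real.log (b i / A.mulVec x' i) := by
    rw [← Finset.sum_sub_distrib]
    apply Finset.sum_congr rfl
    intro i _
    rw [Real.log_div (hAx' i).ne' (hAx i).ne', Real.log_div (hb i).ne' (hAx i).ne',
      Real.log_div (hb i).ne' (hAx' i).ne']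
    ring
  linarith [key2, key3 ▸ key2, key4, e2]

private lemma step_star {m₁ m₂ : ℕ} (A : Matrix (Fin m₁) (Fin m₂) ℝ)
    (hA : ∀ i j, 0 ≤ A i j) (b : Fin m₁ → ℝ) (hb : ∀ i, 0 < b i)
    (hbsum : ∑ i, b i = 1)
    (x x' y : Fin m₂ → ℝ) (hx : ∀ j, 0 < x j) (hy : ∀ j, 0 < y j)
    (hysum : ∑ j, y j = 1)
    (s : Fin m₂ → ℝ) (hs : ∀ j, 0 < s j)
    (hsrep : ∀ j, s j = ∑ i, A i j * (b i / A.mulVec x i))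
    (hx' : ∀ j, x' j = x j * s j)
    (t : Fin m₂ → ℝ) (ht : ∀ j, t j = ∑ i, A i j * (b i / A.mulVec y i))
    (htpos : ∀ j, 0 < t j)
    (hAx : ∀ i, 0 < A.mulVec x i) (hAy : ∀ i, 0 < A.mulVec y i) :
    ∑ i, b i * Real.log (b i / A.mulVec x i)
      ≤ ∑ i, b i * Real.log (b i / A.mulVec y i)
        + ((∑ j, (y j * t j) * Real.log ((y j * t j) / x j))
           - ∑ j, (y j * t j) * Real.log ((y j * t j) / x' j)) := by
  classical
  set P : Fin m₁ → Fin m₂ → ℝ := fun i j => b i * (A i j * y j / A.mulVec y i) with hP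
  set Q : Fin m₁ → Fin m₂ → ℝ := fun i j => b i * (A i j * x j / A.mulVec x i) with hQ
  have hx'pos : ∀ j, 0 < x' j := fun j => by rw [hx' j]; exact mul_pos (hx j) (hs j)
  have hPnn : ∀ i j, 0 ≤ P i j := fun i j =>
    mul_nonneg (hb i).le (div_nonneg (mul_nonneg (hA i j) (hy j).le) (hAy i).le)
  -- per-column log-sum inequality
  have colsum : ∀ j, (y j * t j) * Real.log ((y j * t j) / x' j)
      ≤ (y j * t j) * Real.log (y j / x j)
        + ∑ i, P i j * Real.log (A.mulVec x i / A.mulVec y i) := by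
    intro j
    set F : Finset (Fin m₁) := Finset.univ.filter (fun i => 0 < A i j) with hF
    have hmem : ∀ i, i ∈ F ↔ 0 < A i j := by intro i; simp [hF]
    have hzeroA : ∀ i ∈ Finset.univ, i ∉ F → A i j = 0 := by
      intro i _ hi
      have : ¬ 0 < A i j := fun h => hi ((hmem i).2 h)
      exact le_antisymm (not_lt.1 this) (hA i j)
    have hFP : ∑ i ∈ F, P i j = y j * t j := by
      rw [Finset.sum_subset (Finset.subset_univ F)
        (fun i _ hni => by simp [hP, hzeroA i (Finset.mem_univ i) hni]), ht j,
        Finset.mul_sum]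
      apply Finset.sum_congr rfl
      intro i _
      rw [hP]
      ring
    have hFQ : ∑ i ∈ F, Q i j = x' j := by
      rw [Finset.sum_subset (Finset.subset_univ F)
        (fun i _ hni => by simp [hQ, hzeroA i (Finset.mem_univ i) hni]), hx' j, hsrep j,
        Finset.mul_sum]
      apply Finset.sum_congr rfl
      intro i _
      rw [hQ]
      ring
    have h1 := logSum F (fun i => P i j) (fun i => Q i j)
      (fun i _ => hPnn i j)
      (fun i hi => by
        have hAij := (hmem i).1 hi
        exact mul_pos (hb i) (div_pos (mul_pos hAij (hx j)) (hAx i)))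
    rw [hFP, hFQ] at h1
    have h2 : ∑ i ∈ F, P i j * Real.log (P i j / Q i j)
        = (∑ i ∈ F, P i j) * Real.log (y j / x j)
          + ∑ i ∈ F, P i j * Real.log (A.mulVec x i / A.mulVec y i) := by
      rw [Finset.sum_mul, ← Finset.sum_add_distrib]
      apply Finset.sum_congr rfl
      intro i hi
      have hAij := (hmem i).1 hi
      have ePQ : P i j / Q i j = (y j / x j) * (A.mulVec x i / A.mulVec y i) := by
        have h₁ := (hb i).ne'
        have h₂ := hAij.ne'
        have h₃ := (hAx i).ne'
        have h₄ := (hAy i).ne'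
        have h₅ := (hx j).ne'
        have h₆ := (hy j).ne'
        rw [hP, hQ]
        field_simp
      rw [ePQ, Real.log_mul (div_pos (hy j) (hx j)).ne' (div_pos (hAx i) (hAy i)).ne']
      ring
    rw [h2, hFP] at h1
    have h3 : ∑ i ∈ F, P i j * Real.log (A.mulVec x i / A.mulVec y i)
        = ∑ i, P i j * Real.log (A.mulVec x i / A.mulVec y i) :=
      Finset.sum_subset (Finset.subset_univ F)
        (fun i _ hni => by simp [hP, hzeroA i (Finset.mem_univ i) hni])
    rw [h3] at h1
    exact h1
  have hrowP : ∀ i, ∑ j, P i j = b i := by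
    intro i
    have e : ∑ j, A i j * y j / A.mulVec y i = 1 := by
      rw [← Finset.sum_div, ← mulVec_apply', div_self (hAy i).ne']
    simp only [hP]
    rw [← Finset.mul_sum, e, mul_one]
  have B : ∑ j, (y j * t j) * Real.log ((y j * t j) / x' j)
      ≤ (∑ j, (y j * t j) * Real.log (y j / x j))
        + ∑ i, b i * Real.log (A.mulVec x i / A.mulVec y i) := by
    have h4 := Finset.sum_le_sum (fun j (_ : j ∈ Finset.univ) => colsum j)
    rw [Finset.sum_add_distrib] at h4
    have swap : ∑ j, ∑ i, P i j * Real.log (A.mulVec x i / A.mulVec y i)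
        = ∑ i, b i * Real.log (A.mulVec x i / A.mulVec y i) := by
      rw [Finset.sum_comm]
      apply Finset.sum_congr rfl
      intro i _
      rw [← Finset.sum_mul, hrowP i]
    rw [swap] at h4
    exact h4
  have hytsum : ∑ j, y j * t j = 1 := by
    calc ∑ j, y j * t j = ∑ j, ∑ i, (b i / A.mulVec y i) * (A i j * y j) := by
          apply Finset.sum_congr rfl
          intro j _
          rw [ht j, Finset.mul_sum]
          apply Finset.sum_congr rfl
          intro i _
          ring
      _ = ∑ i, ∑ j, (b i / A.mulVec y i) * (A i j * y j) := Finset.sum_comm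
      _ = ∑ i, (b i / A.mulVec y i) * A.mulVec y i := by
          apply Finset.sum_congr rfl
          intro i _
          rw [← Finset.mul_sum, mulVec_apply']
      _ = ∑ i, b i := by
          apply Finset.sum_congr rfl
          intro i _
          rw [div_mul_cancel₀ _ (hAy i).ne']
      _ = 1 := hbsum
  have slack : 0 ≤ ∑ j, (y j * t j) * Real.log ((y j * t j) / y j) :=
    gibbs Finset.univ (fun j => y j * t j) y
      (fun j _ => (mul_pos (hy j) (htpos j)).le) (fun j _ => hy j)
      (by rw [hytsum, hysum])
  have e3 : ∑ j, (y j * t j) * Real.log (y j / x j)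
      = (∑ j, (y j * t j) * Real.log ((y j * t j) / x j))
        - ∑ j, (y j * t j) * Real.log ((y j * t j) / y j) := by
    rw [← Finset.sum_sub_distrib]
    apply Finset.sum_congr rfl
    intro j _
    have hyt := mul_pos (hy j) (htpos j)
    rw [Real.log_div (hy j).ne' (hx j).ne', Real.log_div hyt.ne' (hx j).ne',
      Real.log_div hyt.ne' (hy j).ne']
    ring
  have e4 : ∑ i, b i * Real.log (A.mulVec x i / A.mulVec y i)
      = (∑ i, b i * Real.log (b i / A.mulVec y i))
        - ∑ i, b i * Real.log (b i / A.mulVec x i) := by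
    rw [← Finset.sum_sub_distrib]
    apply Finset.sum_congr rfl
    intro i _
    rw [Real.log_div (hAx i).ne' (hAy i).ne', Real.log_div (hb i).ne' (hAy i).ne',
      Real.log_div (hb i).ne' (hAx i).ne']
    ring
  rw [e3] at B
  rw [e4] at B
  linarith


private lemma yt_sum {m₁ m₂ : ℕ} (A : Matrix (Fin m₁) (Fin m₂) ℝ) (b : Fin m₁ → ℝ)
    (hbsum : ∑ i, b i = 1) (y : Fin m₂ → ℝ) (hAy : ∀ i, 0 < A.mulVec y i) :
    ∑ j, y j * (∑ i, A i j * (b i / A.mulVec y i)) = 1 := by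
  calc ∑ j, y j * (∑ i, A i j * (b i / A.mulVec y i))
      = ∑ j, ∑ i, (b i / A.mulVec y i) * (A i j * y j) := by
        apply Finset.sum_congr rfl
        intro j _
        rw [Finset.mul_sum]
        apply Finset.sum_congr rfl
        intro i _
        ring
    _ = ∑ i, ∑ j, (b i / A.mulVec y i) * (A i j * y j) := Finset.sum_comm
    _ = ∑ i, (b i / A.mulVec y i) * A.mulVec y i := by
        apply Finset.sum_congr rfl
        intro i _
        rw [← Finset.mul_sum, mulVec_apply']
    _ = ∑ i, b i := by
        apply Finset.sum_congr rfl
        intro i _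
        rw [div_mul_cancel₀ _ (hAy i).ne']
    _ = 1 := hbsum

/-- Kullback–Leibler divergence between nonnegative vectors, valued in `EReal`,
with the convention that `D(u, v) = ∞` if `uᵢ > 0` and `vᵢ = 0` for some `i`
(and the convention `0 * log (0 / v) = 0` inside the sum). -/
noncomputable def KLE {m : ℕ} (u v : Fin m → ℝ) : EReal :=
  if ∃ i, 0 < u i ∧ v i = 0 then ⊤
  else ((∑ i, u i * Real.log (u i / v i) : ℝ) : EReal)

/-- For a possibly inconsistent system, `D(b, Axₙ)` is nonincreasing and converges
to `inf_x D(b, Ax)` over positive probability vectors `x`. -/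
theorem em_iteration_alternating_minimization {m₁ m₂ : ℕ}
    (A : Matrix (Fin m₁) (Fin m₂) ℝ) (hA : ∀ i j, 0 ≤ A i j)
    (hcol : ∀ j, ∑ i, A i j = 1)
    (b : Fin m₁ → ℝ) (hb : ∀ i, 0 < b i) (hbsum : ∑ i, b i = 1)
    (x : ℕ → Fin m₂ → ℝ) (hx0 : ∀ j, 0 < x 0 j) (hx0sum : ∑ j, x 0 j = 1)
    (hrec : ∀ n j, x (n + 1) j = x n j * ∑ i, A i j * (b i / A.mulVec (x n) i)) :
    Antitone (fun n => KLE b (A.mulVec (x n))) ∧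
    Filter.Tendsto (fun n => KLE b (A.mulVec (x n))) Filter.atTop
      (nhds (sInf {r : EReal | ∃ y : Fin m₂ → ℝ,
        (∀ j, 0 < y j) ∧ (∑ j, y j = 1) ∧ r = KLE b (A.mulVec y)})) := by
  classical
  have hcolpos : ∀ j, ∃ i, 0 < A i j := by
    intro j
    by_contra hc
    push_neg at hc
    have hz : ∀ i ∈ Finset.univ, A i j = 0 := fun i _ => le_antisymm (hc i) (hA i j)
    have h0 := hcol j
    rw [Finset.sum_eq_zero hz] at h0
    norm_num at h0
  have hAxge : ∀ (z : Fin m₂ → ℝ), (∀ j, 0 ≤ z j) → ∀ i, 0 ≤ A.mulVec z i := by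
    intro z hz i
    rw [mulVec_apply']
    exact Finset.sum_nonneg fun j _ => mul_nonneg (hA i j) (hz j)
  have hspos : ∀ (z : Fin m₂ → ℝ), (∀ j, 0 < z j) →
      ∀ j, 0 < ∑ i, A i j * (b i / A.mulVec z i) := by
    intro z hz j
    obtain ⟨i₀, hi₀⟩ := hcolpos j
    apply Finset.sum_pos'
    · intro i _
      exact mul_nonneg (hA i j) (div_nonneg (hb i).le (hAxge z (fun j' => (hz j').le) i))
    · refine ⟨i₀, Finset.mem_univ _, ?_⟩
      have hAz : 0 < A.mulVec z i₀ := by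
        rw [mulVec_apply']
        exact Finset.sum_pos' (fun j' _ => mul_nonneg (hA i₀ j') (hz j').le)
          ⟨j, Finset.mem_univ _, mul_pos hi₀ (hz j)⟩
      exact mul_pos hi₀ (div_pos (hb i₀) hAz)
  have hxpos : ∀ n j, 0 < x n j := by
    intro n
    induction n with
    | zero => exact hx0
    | succ n ih =>
      intro j
      rw [hrec n j]
      exact mul_pos (ih j) (hspos (x n) ih j)
  by_cases hrow : ∀ i, ∃ j, 0 < A i j
  · -- main case: every row of A is nonzero
    have hAxpos : ∀ (z : Fin m₂ → ℝ), (∀ j, 0 < z j) → ∀ i, 0 < A.mulVec z i := by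
      intro z hz i
      obtain ⟨j₀, hj₀⟩ := hrow i
      rw [mulVec_apply']
      exact Finset.sum_pos' (fun j _ => mul_nonneg (hA i j) (hz j).le)
        ⟨j₀, Finset.mem_univ _, mul_pos hj₀ (hz j₀)⟩
    have hAsum : ∀ (z : Fin m₂ → ℝ), ∑ i, A.mulVec z i = ∑ j, z j := by
      intro z
      calc ∑ i, A.mulVec z i = ∑ i, ∑ j, A i j * z j := by
            apply Finset.sum_congr rfl
            intro i _
            rw [mulVec_apply']
        _ = ∑ j, ∑ i, A i j * z j := Finset.sum_comm
        _ = ∑ j, z j := by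
            apply Finset.sum_congr rfl
            intro j _
            rw [← Finset.sum_mul, hcol j, one_mul]
    have hxsum : ∀ n, ∑ j, x n j = 1 := by
      intro n
      induction n with
      | zero => exact hx0sum
      | succ n ih =>
        have e : ∀ j, x (n+1) j = x n j * ∑ i, A i j * (b i / A.mulVec (x n) i) := hrec n
        rw [Finset.sum_congr rfl (fun j _ => e j)]
        exact yt_sum A b hbsum (x n) (hAxpos (x n) (hxpos n))
    set f : ℕ → ℝ := fun n => ∑ i, b i * Real.log (b i / A.mulVec (x n) i) with hf
    have hKLEy : ∀ y : Fin m₂ → ℝ, (∀ j, 0 < y j) →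
        KLE b (A.mulVec y) = ((∑ i, b i * Real.log (b i / A.mulVec y i) : ℝ) : EReal) := by
      intro y hy
      rw [KLE, if_neg]
      rintro ⟨i, -, h2⟩
      exact (hAxpos y hy i).ne' h2
    have hKLEn : ∀ n, KLE b (A.mulVec (x n)) = ((f n : ℝ) : EReal) := fun n =>
      hKLEy (x n) (hxpos n)
    have hmono : ∀ n, f (n+1) ≤ f n := by
      intro n
      exact step_mono A hA b hb (x n) (x (n+1)) (hxpos n)
        (fun j => ∑ i, A i j * (b i / A.mulVec (x n) i)) (hspos (x n) (hxpos n))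
        (fun j => rfl) (hrec n) (hAxpos (x n) (hxpos n)) (hAxpos (x (n+1)) (hxpos (n+1)))
        (by rw [hxsum n, hxsum (n+1)])
    have hanti : Antitone f := antitone_nat_of_succ_le hmono
    have hf0 : ∀ n, 0 ≤ f n := by
      intro n
      exact gibbs Finset.univ b (A.mulVec (x n)) (fun i _ => (hb i).le)
        (fun i _ => hAxpos (x n) (hxpos n) i) (by rw [hbsum, hAsum (x n), hxsum n])
    have hbdd : BddBelow (Set.range f) := ⟨0, by rintro v ⟨n, rfl⟩; exact hf0 n⟩
    set L := ⨅ n, f n with hL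
    have htend : Filter.Tendsto f Filter.atTop (nhds L) := tendsto_atTop_ciInf hanti hbdd
    have hLle : ∀ y : Fin m₂ → ℝ, (∀ j, 0 < y j) → (∑ j, y j = 1) →
        L ≤ ∑ i, b i * Real.log (b i / A.mulVec y i) := by
      intro y hy hysum
      set Dy := ∑ i, b i * Real.log (b i / A.mulVec y i) with hDy
      set t : Fin m₂ → ℝ := fun j => ∑ i, A i j * (b i / A.mulVec y i) with htdef
      have htpos : ∀ j, 0 < t j := hspos y hy
      set g : ℕ → ℝ := fun n => ∑ j, (y j * t j) * Real.log ((y j * t j) / x n j) with hg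
      have hstar : ∀ n, f n ≤ Dy + (g n - g (n+1)) := by
        intro n
        exact step_star A hA b hb hbsum (x n) (x (n+1)) y (hxpos n) hy hysum
          (fun j => ∑ i, A i j * (b i / A.mulVec (x n) i)) (hspos (x n) (hxpos n))
          (fun j => rfl) (hrec n) t (fun j => rfl) htpos
          (hAxpos (x n) (hxpos n)) (hAxpos y hy)
      have hytsum : ∑ j, y j * t j = 1 := yt_sum A b hbsum y (hAxpos y hy)
      have hgnn : ∀ n, 0 ≤ g n := by
        intro n
        exact gibbs Finset.univ (fun j => y j * t j) (x n)
          (fun j _ => (mul_pos (hy j) (htpos j)).le) (fun j _ => hxpos n j)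
          (by rw [hytsum, hxsum n])
      have hNf : ∀ N : ℕ, (N : ℝ) * f N ≤ (N : ℝ) * Dy + g 0 := by
        intro N
        have h1 : ∑ _n ∈ Finset.range N, f N ≤ ∑ n ∈ Finset.range N, f n :=
          Finset.sum_le_sum fun n hn => hanti (le_of_lt (Finset.mem_range.1 hn))
        have h2 : ∑ n ∈ Finset.range N, f n
            ≤ ∑ n ∈ Finset.range N, (Dy + (g n - g (n+1))) :=
          Finset.sum_le_sum fun n _ => hstar n
        rw [Finset.sum_const, Finset.card_range, nsmul_eq_mul] at h1
        rw [Finset.sum_add_distrib, Finset.sum_const, Finset.card_range, nsmul_eq_mul,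
          Finset.sum_range_sub' g N] at h2
        have h3 := hgnn N
        linarith
      have hLleN : ∀ N : ℕ, 1 ≤ N → L ≤ Dy + g 0 / N := by
        intro N hN
        have hNpos : (0:ℝ) < N := by exact_mod_cast hN
        have h4 : (N:ℝ) * f N ≤ (N:ℝ) * (Dy + g 0 / N) := by
          rw [mul_add, mul_div_cancel₀ _ hNpos.ne']
          exact hNf N
        exact le_trans (ciInf_le hbdd N) (le_of_mul_le_mul_left h4 hNpos)
      have hlim : Filter.Tendsto (fun N : ℕ => Dy + g 0 / N) Filter.atTop (nhds (Dy + 0)) :=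
        tendsto_const_nhds.add (tendsto_const_div_atTop_nhds_zero_nat (g 0))
      rw [add_zero] at hlim
      exact ge_of_tendsto hlim (Filter.eventually_atTop.2 ⟨1, hLleN⟩)
    set S := {r : EReal | ∃ y : Fin m₂ → ℝ,
        (∀ j, 0 < y j) ∧ (∑ j, y j = 1) ∧ r = KLE b (A.mulVec y)} with hS
    have hSf : ∀ n, ((f n : ℝ) : EReal) ∈ S := fun n =>
      ⟨x n, hxpos n, hxsum n, (hKLEn n).symm⟩
    have h1 : ((L : ℝ) : EReal) ≤ sInf S := by
      apply le_sInf
      rintro r ⟨y, hy, hysum, rfl⟩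
      rw [hKLEy y hy]
      exact EReal.coe_le_coe_iff.2 (hLle y hy hysum)
    have h2 : sInf S ≤ ((L : ℝ) : EReal) := by
      by_contra hc
      push_neg at hc
      obtain ⟨z, hz1, hz2⟩ := EReal.exists_between_coe_real hc
      have hLz : L < z := EReal.coe_lt_coe_iff.1 hz1
      obtain ⟨n, hn⟩ := exists_lt_of_ciInf_lt hLz
      exact absurd ((sInf_le (hSf n)).trans_lt (EReal.coe_lt_coe_iff.2 hn)) hz2.asymm
    have hsinf : sInf S = ((L : ℝ) : EReal) := le_antisymm h2 h1
    constructor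
    · intro a b' hab
      simp only [hKLEn]
      exact EReal.coe_le_coe_iff.2 (hanti hab)
    · rw [hsinf]
      have he : (fun n => KLE b (A.mulVec (x n))) = fun n => ((f n : ℝ) : EReal) :=
        funext hKLEn
      rw [he]
      exact EReal.tendsto_coe.2 htend
  · -- degenerate case: some row of A is identically zero
    push_neg at hrow
    obtain ⟨i₀, hi₀⟩ := hrow
    have hz : ∀ j, A i₀ j = 0 := fun j => le_antisymm (hi₀ j) (hA i₀ j)
    have hmv0 : ∀ z : Fin m₂ → ℝ, A.mulVec z i₀ = 0 := by
      intro z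
      rw [mulVec_apply']
      exact Finset.sum_eq_zero fun j _ => by rw [hz j, zero_mul]
    have hKT : ∀ z : Fin m₂ → ℝ, KLE b (A.mulVec z) = ⊤ := by
      intro z
      rw [KLE, if_pos ⟨i₀, hb i₀, hmv0 z⟩]
    have hset : sInf {r : EReal | ∃ y : Fin m₂ → ℝ,
        (∀ j, 0 < y j) ∧ (∑ j, y j = 1) ∧ r = KLE b (A.mulVec y)} = ⊤ := by
      apply sInf_eq_top.2
      rintro r ⟨y, hy, hy1, rfl⟩
      exact hKT y
    constructor
    · intro a b' _
      simp only [hKT]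
      exact le_refl _
    · rw [hset]
      simp only [hKT]
      exact tendsto_const_nhds
end

section
/- Let $A = (a_{ij})$ be an $m \times m$ nonsingular nonnegative matrix whose every column is a probability vector, and let $b$ and $x^*$ be positive probability vectors in $\mathbb{R}^m$ with $Ax^* = b$. For a positive probability vector $x \in \mathbb{R}^m$, define $\phi_j(x) = \sum_{i=1}^m \frac{a_{ij} b_i}{\sum_{j'} a_{ij'} x_{j'}}$. Then $\phi_j(x) = 1$ for every $j = 1, \dots, m$ if and only if $x = x^*$. -/
/-- Fixed-point characterization: `φⱼ(x) = 1` for all `j` iff `x = x*`,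
where `φⱼ(x) = ∑ᵢ aᵢⱼ bᵢ / (∑ⱼ' aᵢⱼ' xⱼ')`. -/
theorem fixed_point_characterization {m : ℕ}
    (A : Matrix (Fin m) (Fin m) ℝ) (hdet : A.det ≠ 0)
    (hA : ∀ i j, 0 ≤ A i j) (hcol : ∀ j, ∑ i, A i j = 1)
    (b xstar : Fin m → ℝ)
    (hb : ∀ i, 0 < b i) (hbsum : ∑ i, b i = 1)
    (hxs : ∀ j, 0 < xstar j) (hxssum : ∑ j, xstar j = 1)
    (hsol : A.mulVec xstar = b)
    (x : Fin m → ℝ) (hx : ∀ j, 0 < x j) (hxsum : ∑ j, x j = 1) :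
    (∀ j, ∑ i, A i j * b i / (∑ j', A i j' * x j') = 1) ↔ x = xstar := by
  have hinj : Function.Injective A.mulVec :=
    Matrix.mulVec_injective_iff_isUnit.2 <|
      (Matrix.isUnit_iff_isUnit_det A).2 (isUnit_iff_ne_zero.2 hdet)
  -- positivity of s i = ∑ j' A i j' * x j'
  have hs : ∀ i, 0 < ∑ j', A i j' * x j' := by
    intro i
    rcases (Finset.sum_nonneg fun j _ => mul_nonneg (hA i j) (hx j).le).lt_or_eq with h | h
    · exact h
    · exfalso
      apply hdet
      apply Matrix.det_eq_zero_of_row_eq_zero i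
      intro j
      have := (Finset.sum_eq_zero_iff_of_nonneg
        (fun j _ => mul_nonneg (hA i j) (hx j).le)).1 h.symm j (Finset.mem_univ j)
      have hxj := (hx j).ne'
      rcases mul_eq_zero.1 this with h' | h'
      · exact h'
      · exact absurd h' hxj
  constructor
  · intro hphi
    -- Aᵀ (b/s - 1) = 0
    have hv : (fun i => b i / (∑ j', A i j' * x j') - 1) = 0 := by
      have h0 : A.transpose.mulVec (fun i => b i / (∑ j', A i j' * x j') - 1) =
          A.transpose.mulVec 0 := by
        funext j
        simp only [Matrix.mulVec, dotProduct, Matrix.transpose_apply, Pi.zero_apply,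
          mul_zero, Finset.sum_const_zero]
        have : ∑ i, A i j * (b i / (∑ j', A i j' * x j') - 1) =
            (∑ i, A i j * b i / (∑ j', A i j' * x j')) - ∑ i, A i j := by
          rw [← Finset.sum_sub_distrib]
          congr 1; funext i; ring
        rw [this, hphi j, hcol j, sub_self]
      have hinjT : Function.Injective A.transpose.mulVec :=
        Matrix.mulVec_injective_iff_isUnit.2 <|
          (Matrix.isUnit_iff_isUnit_det _).2
            (by rw [Matrix.det_transpose]; exact isUnit_iff_ne_zero.2 hdet)
      exact hinjT h0
    have hbs : ∀ i, b i = ∑ j', A i j' * x j' := by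
      intro i
      have := congrFun hv i
      simp only [Pi.zero_apply, sub_eq_zero] at this
      exact (div_eq_one_iff_eq (hs i).ne').1 this
    have : A.mulVec x = A.mulVec xstar := by
      rw [hsol]
      funext i
      simp only [Matrix.mulVec, dotProduct]
      exact (hbs i).symm
    exact hinj this
  · intro h
    subst h
    intro j
    have hbb : ∀ i, (∑ j', A i j' * x j') = b i := by
      intro i
      rw [← hsol]
      rfl
    calc ∑ i, A i j * b i / (∑ j', A i j' * x j')
        = ∑ i, A i j := by
          apply Finset.sum_congr rfl
          intro i _
          rw [hbb i, mul_div_assoc, div_self (hb i).ne', mul_one]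
      _ = 1 := hcol j
end

section
/- Let $A = (a_{ij})$ be an $m_1 \times m_2$ nonnegative matrix whose every column is a probability vector, let $b \in \mathbb{R}^{m_1}$ be a positive probability vector, and let $x_n \in \mathbb{R}^{m_2}$ be a positive probability vector with $b_n = Ax_n$. Define bivariate probability mass functions $q_n(i,j) = x_{n,j} a_{ij}$ and $p_n(i,j) = b_i q_n(i,j)/\sum_{j'} q_n(i,j')$. Let $\mathcal{P}$ be the set of bivariate probability mass functions $p$ on $\{1,\dots,m_1\} \times \{1,\dots,m_2\}$ with $\sum_j p(i,j) = b_i$ for all $i$. Then $D(p_n, q_n) = D(b, b_n)$ and $D(p_n, q_n) \le D(p, q_n)$ for every $p \in \mathcal{P}$; that is, $p_n$ minimizes $p \mapsto D(p, q_n)$ over $\mathcal{P}$. -/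
/-- Kullback–Leibler divergence between bivariate mass functions, valued in `EReal`,
with the convention that `D(p, q) = ∞` if `p(i,j) > 0` and `q(i,j) = 0` somewhere. -/
noncomputable def KLE2 {m₁ m₂ : ℕ} (p q : Fin m₁ → Fin m₂ → ℝ) : EReal :=
  if ∃ i j, 0 < p i j ∧ q i j = 0 then ⊤
  else ((∑ i, ∑ j, p i j * Real.log (p i j / q i j) : ℝ) : EReal)

/-- Per-term Gibbs bound: `u - v ≤ u log(u/v)`. -/
lemma kl_term_ge {u v : ℝ} (hu : 0 ≤ u) (hv : 0 ≤ v) (h0 : v = 0 → u = 0) :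
    u - v ≤ u * Real.log (u / v) := by
  rcases hu.eq_or_lt with h | h
  · rw [← h]; simpa using hv
  · have hv' : 0 < v := by
      rcases hv.eq_or_lt with h' | h'
      · exact absurd (h0 h'.symm) (ne_of_gt h)
      · exact h'
    have hlog : Real.log (v / u) ≤ v / u - 1 :=
      Real.log_le_sub_one_of_pos (by positivity)
    have h2 : Real.log (u / v) = -Real.log (v / u) := by
      rw [Real.log_div (ne_of_gt h) (ne_of_gt hv'), Real.log_div (ne_of_gt hv') (ne_of_gt h)]
      ring
    have h3 : 1 - v / u ≤ Real.log (u / v) := by rw [h2]; linarith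
    have h4 : u * (1 - v / u) = u - v := by field_simp
    nlinarith

/-- `pₙ` minimizes `p ↦ D(p, qₙ)` over bivariate pmfs with first marginal `b`,
and the minimum value is `D(pₙ, qₙ) = D(b, bₙ)`. -/
theorem pn_minimizes_KL_over_P {m₁ m₂ : ℕ}
    (A : Matrix (Fin m₁) (Fin m₂) ℝ) (hA : ∀ i j, 0 ≤ A i j)
    (hcol : ∀ j, ∑ i, A i j = 1)
    (b : Fin m₁ → ℝ) (hb : ∀ i, 0 < b i) (hbsum : ∑ i, b i = 1)
    (xn : Fin m₂ → ℝ) (hxn : ∀ j, 0 < xn j) (hxnsum : ∑ j, xn j = 1)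
    (bn : Fin m₁ → ℝ) (hbn : bn = A.mulVec xn) (hbnpos : ∀ i, 0 < bn i)
    (qn pn : Fin m₁ → Fin m₂ → ℝ)
    (hqn : ∀ i j, qn i j = xn j * A i j)
    (hpn : ∀ i j, pn i j = b i * qn i j / ∑ j', qn i j') :
    KLE2 pn qn = KLE b bn ∧
    ∀ p : Fin m₁ → Fin m₂ → ℝ,
      (∀ i j, 0 ≤ p i j) → (∑ i, ∑ j, p i j = 1) → (∀ i, ∑ j, p i j = b i) →
      KLE2 pn qn ≤ KLE2 p qn := by
  -- basic facts
  have hqnneg : ∀ i j, 0 ≤ qn i j := fun i j => by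
    rw [hqn]; exact mul_nonneg (hxn j).le (hA i j)
  have hsum : ∀ i, ∑ j, qn i j = bn i := by
    intro i
    simp only [hqn, hbn, Matrix.mulVec, dotProduct]
    exact Finset.sum_congr rfl fun j _ => mul_comm _ _
  have hpn' : ∀ i j, pn i j = b i * qn i j / bn i := by
    intro i j; rw [hpn, hsum]
  have hpnneg : ∀ i j, 0 ≤ pn i j := fun i j => by
    rw [hpn']
    exact div_nonneg (mul_nonneg (hb i).le (hqnneg i j)) (hbnpos i).le
  have hq0 : ∀ i j, pn i j = 0 ↔ qn i j = 0 := by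
    intro i j
    rw [hpn']
    constructor
    · intro h
      have := (div_eq_zero_iff.mp h).resolve_right (ne_of_gt (hbnpos i))
      exact (mul_eq_zero.mp this).resolve_left (ne_of_gt (hb i))
    · intro h; rw [h]; ring
  have hpnmarg : ∀ i, ∑ j, pn i j = b i := by
    intro i
    have : ∑ j, pn i j = (b i * ∑ j, qn i j) / bn i := by
      rw [Finset.mul_sum, Finset.sum_div]
      exact Finset.sum_congr rfl fun j _ => hpn' i j
    rw [this, hsum]
    exact mul_div_cancel_right₀ _ (ne_of_gt (hbnpos i))
  -- log ratio identity
  have hratio : ∀ i j, qn i j ≠ 0 → pn i j / qn i j = b i / bn i := by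
    intro i j hq
    rw [hpn']
    rw [div_div]
    rw [mul_comm (bn i) (qn i j)]
    rw [← div_div]
    rw [mul_div_assoc, div_self hq, mul_one]
  -- value of KLE2 pn qn
  have hval : KLE2 pn qn = ((∑ i, b i * Real.log (b i / bn i) : ℝ) : EReal) := by
    rw [KLE2, if_neg]
    · norm_cast
      refine Finset.sum_congr rfl fun i _ => ?_
      have : ∀ j ∈ Finset.univ, pn i j * Real.log (pn i j / qn i j)
          = pn i j * Real.log (b i / bn i) := by
        intro j _
        by_cases hq : qn i j = 0
        · rw [(hq0 i j).mpr hq]; ring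
        · rw [hratio i j hq]
      rw [Finset.sum_congr rfl this, ← Finset.sum_mul, hpnmarg]
    · rintro ⟨i, j, hp, hq⟩
      exact absurd ((hq0 i j).mpr hq) (ne_of_gt hp)
  have hbval : KLE b bn = ((∑ i, b i * Real.log (b i / bn i) : ℝ) : EReal) := by
    rw [KLE, if_neg]
    rintro ⟨i, -, h⟩
    exact absurd h (ne_of_gt (hbnpos i))
  refine ⟨hval.trans hbval.symm, ?_⟩
  intro p hp hpsum hpmarg
  by_cases htop : ∃ i j, 0 < p i j ∧ qn i j = 0
  · have h : KLE2 p qn = ⊤ := by rw [KLE2, if_pos htop]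
    rw [h]; exact le_top
  · have hpq0 : ∀ i j, qn i j = 0 → p i j = 0 := by
      intro i j hq
      by_contra h
      exact htop ⟨i, j, (hp i j).lt_of_ne (Ne.symm h), hq⟩
    rw [hval, KLE2, if_neg htop]
    rw [EReal.coe_le_coe_iff]
    -- per-term decomposition
    have hdecomp : ∀ i j, p i j * Real.log (p i j / qn i j)
        = p i j * Real.log (p i j / pn i j) + p i j * Real.log (b i / bn i) := by
      intro i j
      by_cases hq : qn i j = 0
      · rw [hpq0 i j hq]; ring
      · by_cases hpz : p i j = 0
        · rw [hpz]; ring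
        · have hqpos : 0 < qn i j := (hqnneg i j).lt_of_ne (Ne.symm hq)
          have hpnpos : 0 < pn i j := by
            rcases (hpnneg i j).eq_or_lt with h | h
            · exact absurd ((hq0 i j).mp h.symm) hq
            · exact h
          have h1 : Real.log (b i / bn i) = Real.log (pn i j / qn i j) := by
            rw [hratio i j hq]
          rw [h1, Real.log_div hpz hq, Real.log_div hpz (ne_of_gt hpnpos),
            Real.log_div (ne_of_gt hpnpos) hq]
          ring
    have hsplit : ∑ i, ∑ j, p i j * Real.log (p i j / qn i j)
        = (∑ i, ∑ j, p i j * Real.log (p i j / pn i j))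
          + ∑ i, b i * Real.log (b i / bn i) := by
      rw [← Finset.sum_add_distrib]
      refine Finset.sum_congr rfl fun i _ => ?_
      calc ∑ j, p i j * Real.log (p i j / qn i j)
          = ∑ j, (p i j * Real.log (p i j / pn i j) + p i j * Real.log (b i / bn i)) :=
            Finset.sum_congr rfl fun j _ => hdecomp i j
        _ = (∑ j, p i j * Real.log (p i j / pn i j))
              + ∑ j, p i j * Real.log (b i / bn i) := Finset.sum_add_distrib
        _ = (∑ j, p i j * Real.log (p i j / pn i j)) + b i * Real.log (b i / bn i) := by
            rw [← Finset.sum_mul, hpmarg]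
    -- Gibbs: the first sum is nonnegative
    have hgibbs : 0 ≤ ∑ i, ∑ j, p i j * Real.log (p i j / pn i j) := by
      have hterm : ∀ i j, p i j - pn i j ≤ p i j * Real.log (p i j / pn i j) := by
        intro i j
        exact kl_term_ge (hp i j) (hpnneg i j)
          (fun h => hpq0 i j ((hq0 i j).mp h))
      have hsums : ∑ i, ∑ j, (p i j - pn i j) = 0 := by
        have h1 : ∑ i, ∑ j, (p i j - pn i j) = (∑ i, ∑ j, p i j) - ∑ i, ∑ j, pn i j := by
          rw [← Finset.sum_sub_distrib]
          exact Finset.sum_congr rfl fun i _ => by rw [← Finset.sum_sub_distrib]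
        rw [h1, hpsum]
        have : ∑ i, ∑ j, pn i j = 1 := by
          rw [Finset.sum_congr rfl fun i _ => hpnmarg i, hbsum]
        rw [this]; ring
      calc (0:ℝ) = ∑ i, ∑ j, (p i j - pn i j) := hsums.symm
      _ ≤ ∑ i, ∑ j, p i j * Real.log (p i j / pn i j) :=
          Finset.sum_le_sum fun i _ => Finset.sum_le_sum fun j _ => hterm i j
    linarith [hsplit, hgibbs]
end
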